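/- arXiv:1703.07406 — 4 statements merged into one kernel-verified Lean document; each statement's English description precedes it below -/
import Mathlib

section
/- Let G be a polycyclic group, let H = Fitt(G) be its Fitting subgroup, and let K = [H,H], so that K ⊴ G is nilpotent. If G/K = G/[H,H] is virtually nilpotent, then G is virtually nilpotent. -/
/-- A group is virtually nilpotent if it has a nilpotent subgroup of finite index. -/
def IsVirtuallyNilpotent (G : Type*) [Group G] : Prop :=
  ∃ H : Subgroup G, H.FiniteIndex ∧ Group.IsNilpotent H

/-- A group is polycyclic if it admits a subnormal series with cyclic quotients. -/
def IsPolycyclic (G : Type*) [Group G] : Prop :=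
  ∃ (m : ℕ) (s : Fin (m + 1) → Subgroup G), s 0 = ⊥ ∧ s (Fin.last m) = ⊤ ∧
    ∀ i : Fin m, s i.castSucc ≤ s i.succ ∧
      (∀ g ∈ s i.succ, ∀ x ∈ s i.castSucc, g * x * g⁻¹ ∈ s i.castSucc) ∧
      ∃ g ∈ s i.succ, ∀ h ∈ s i.succ, ∃ z : ℤ, h * (g ^ z)⁻¹ ∈ s i.castSucc

namespace HallFitting

open Subgroup

variable {G : Type*} [Group G]

/-- A commutator of subgroups is contained in a normal subgroup `Y` iff the images
in `G⧸Y` centralize each other. -/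
theorem commutator_le_iff_quot (A B Y : Subgroup G) [Y.Normal] :
    ⁅A, B⁆ ≤ Y ↔
      map (QuotientGroup.mk' Y) A ≤
        centralizer (map (QuotientGroup.mk' Y) B : Subgroup (G ⧸ Y)) := by
  rw [← commutator_eq_bot_iff_le_centralizer, ← map_commutator, Subgroup.map_eq_bot_iff,
    QuotientGroup.ker_mk']

theorem commutator_iSup_left_le {ι : Sort*} (f : ι → Subgroup G) (B Y : Subgroup G) [Y.Normal]
    (h : ∀ i, ⁅f i, B⁆ ≤ Y) : ⁅⨆ i, f i, B⁆ ≤ Y := by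
  rw [commutator_le_iff_quot, Subgroup.map_iSup]
  exact iSup_le fun i => (commutator_le_iff_quot _ _ _).mp (h i)

theorem commutator_sup_left_le {A B C Y : Subgroup G} [Y.Normal]
    (h1 : ⁅A, C⁆ ≤ Y) (h2 : ⁅B, C⁆ ≤ Y) : ⁅A ⊔ B, C⁆ ≤ Y := by
  rw [commutator_le_iff_quot, Subgroup.map_sup]
  exact sup_le ((commutator_le_iff_quot _ _ _).mp h1) ((commutator_le_iff_quot _ _ _).mp h2)

theorem commutator_sup_right_le {A B C Y : Subgroup G} [Y.Normal]
    (h1 : ⁅A, B⁆ ≤ Y) (h2 : ⁅A, C⁆ ≤ Y) : ⁅A, B ⊔ C⁆ ≤ Y :=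
  (commutator_comm A (B ⊔ C)).le.trans
    (commutator_sup_left_le ((commutator_comm B A).le.trans h1)
      ((commutator_comm C A).le.trans h2))

/-- The "three subgroups lemma" relative to a normal subgroup `Y`. -/
theorem commutator_commutator_le_of_rotate {A B C Y : Subgroup G} [Y.Normal]
    (h1 : ⁅⁅B, C⁆, A⁆ ≤ Y) (h2 : ⁅⁅C, A⁆, B⁆ ≤ Y) : ⁅⁅A, B⁆, C⁆ ≤ Y := by
  have key : ∀ P Q R : Subgroup G, ⁅⁅P, Q⁆, R⁆ ≤ Y ↔
      ⁅⁅map (QuotientGroup.mk' Y) P, map (QuotientGroup.mk' Y) Q⁆,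
        map (QuotientGroup.mk' Y) R⁆ = ⊥ := by
    intro P Q R
    rw [← map_commutator, ← map_commutator, Subgroup.map_eq_bot_iff, QuotientGroup.ker_mk']
  rw [key]
  exact Subgroup.commutator_commutator_eq_bot_of_rotate ((key _ _ _).mp h1) ((key _ _ _).mp h2)

theorem normal_iSup_of {ι : Sort*} {f : ι → Subgroup G} (h : ∀ i, (f i).Normal) :
    (⨆ i, f i).Normal := by
  constructor
  intro n hn g
  have hle : (⨆ i, f i) ≤ comap (MulAut.conj g).toMonoidHom (⨆ i, f i) := by
    refine iSup_le fun i => le_trans (fun x hx => ?_) (comap_mono (le_iSup f i))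
    rw [mem_comap]
    simpa using (h i).conj_mem x hx g
  have := hle hn
  rw [mem_comap] at this
  simpa using this

/-- The lower central series of a subgroup `N`, as subgroups of the ambient group. -/
def chainC (N : Subgroup G) : ℕ → Subgroup G
  | 0 => N
  | n + 1 => ⁅chainC N n, N⁆

/-- The iterated commutators `[N, G, G, …, G]`. -/
def chainT (N : Subgroup G) : ℕ → Subgroup G
  | 0 => N
  | n + 1 => ⁅chainT N n, ⊤⁆

theorem chainC_normal (N : Subgroup G) [N.Normal] : ∀ n, (chainC N n).Normal
  | 0 => ‹N.Normal›
  | n + 1 => by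
      haveI := chainC_normal N n
      exact Subgroup.commutator_normal _ _

theorem chainT_normal (N : Subgroup G) [N.Normal] : ∀ n, (chainT N n).Normal
  | 0 => ‹N.Normal›
  | n + 1 => by
      haveI := chainT_normal N n
      exact Subgroup.commutator_normal _ _

theorem chainC_le (N : Subgroup G) [N.Normal] : ∀ n, chainC N n ≤ N
  | 0 => le_rfl
  | n + 1 => Subgroup.commutator_le_right _ _

theorem chainC_succ_le (N : Subgroup G) [N.Normal] (n : ℕ) : chainC N (n + 1) ≤ chainC N n := by
  haveI := chainC_normal N n
  exact Subgroup.commutator_le_left _ _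

theorem chainC_antitone (N : Subgroup G) [N.Normal] : Antitone (chainC N) :=
  antitone_nat_of_succ_le (chainC_succ_le N)

theorem chainT_succ_le (N : Subgroup G) [N.Normal] (n : ℕ) : chainT N (n + 1) ≤ chainT N n := by
  haveI := chainT_normal N n
  exact Subgroup.commutator_le_left _ _

theorem chainT_antitone (N : Subgroup G) [N.Normal] : Antitone (chainT N) :=
  antitone_nat_of_succ_le (chainT_succ_le N)

theorem chainT_le_lcs (N : Subgroup G) : ∀ n, chainT N n ≤ Subgroup.lowerCentralSeries (⊤ : Subgroup G) n
  | 0 => le_top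
  | n + 1 => by
      show ⁅chainT N n, ⊤⁆ ≤ ⁅Subgroup.lowerCentralSeries (⊤ : Subgroup G) n, ⊤⁆
      exact Subgroup.commutator_mono (chainT_le_lcs N n) le_rfl

theorem le_map_subtype_top (L : Subgroup G) : L ≤ map L.subtype ⊤ := fun x hx =>
  ⟨⟨x, hx⟩, Subgroup.mem_top _, rfl⟩

theorem map_subtype_le' (L : Subgroup G) (X : Subgroup ↥L) : map L.subtype X ≤ L := by
  rintro _ ⟨y, -, rfl⟩
  exact y.2

theorem map_lcs_le_chainC (L : Subgroup G) :
    ∀ n, map L.subtype (Subgroup.lowerCentralSeries (⊤ : Subgroup ↥L) n) ≤ chainC L n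
  | 0 => map_subtype_le' L _
  | n + 1 => by
      show map L.subtype ⁅Subgroup.lowerCentralSeries (⊤ : Subgroup ↥L) n, ⊤⁆ ≤ ⁅chainC L n, L⁆
      rw [map_commutator]
      exact Subgroup.commutator_mono (map_lcs_le_chainC L n) (map_subtype_le' L _)

theorem chainC_le_map_lcs (L : Subgroup G) :
    ∀ n, chainC L n ≤ map L.subtype (Subgroup.lowerCentralSeries (⊤ : Subgroup ↥L) n)
  | 0 => le_map_subtype_top L
  | n + 1 => by
      show ⁅chainC L n, L⁆ ≤ map L.subtype ⁅Subgroup.lowerCentralSeries (⊤ : Subgroup ↥L) n, ⊤⁆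
      rw [map_commutator]
      exact Subgroup.commutator_mono (chainC_le_map_lcs L n) (le_map_subtype_top L)

theorem isNilpotent_of_chainC_eq_bot (L : Subgroup G) (n : ℕ) (h : chainC L n = ⊥) :
    Group.IsNilpotent ↥L := by
  rw [_root_.nilpotent_iff_lowerCentralSeries]
  refine ⟨n, ?_⟩
  have := (map_lcs_le_chainC L n).trans h.le
  rwa [le_bot_iff, Subgroup.map_eq_bot_iff, Subgroup.ker_subtype, le_bot_iff] at this

theorem exists_chainC_eq_bot (L : Subgroup G) (h : Group.IsNilpotent ↥L) :
    ∃ n, chainC L n = ⊥ := by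
  obtain ⟨n, hn⟩ := _root_.nilpotent_iff_lowerCentralSeries.mp h
  refine ⟨n, le_bot_iff.mp ((chainC_le_map_lcs L n).trans ?_)⟩
  rw [hn]
  simp

theorem chainC_eq_bot_of_le (L : Subgroup G) [L.Normal] {m n : ℕ} (h : chainC L m = ⊥)
    (hmn : m ≤ n) : chainC L n = ⊥ :=
  le_bot_iff.mp (h ▸ chainC_antitone L hmn)

/-- The chain `chainC`, prepended with `⊤`. -/
def chainE (A : Subgroup G) : ℕ → Subgroup G
  | 0 => ⊤
  | i + 1 => chainC A i

theorem chainE_normal (A : Subgroup G) [A.Normal] : ∀ i, (chainE A i).Normal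
  | 0 => by
      show (⊤ : Subgroup G).Normal
      infer_instance
  | i + 1 => chainC_normal A i

theorem chainE_comm (A : Subgroup G) [A.Normal] : ∀ i, ⁅chainE A i, A⁆ ≤ chainE A (i + 1)
  | 0 => Subgroup.commutator_le_right _ _
  | i + 1 => le_rfl

/-! ### Fitting's theorem -/

/-- **Fitting's theorem**: the join of two normal nilpotent subgroups is nilpotent. -/
theorem fitting (A B : Subgroup G) [A.Normal] [B.Normal]
    (hA : Group.IsNilpotent ↥A) (hB : Group.IsNilpotent ↥B) :
    Group.IsNilpotent ↥(A ⊔ B) := by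
  obtain ⟨a, ha⟩ := exists_chainC_eq_bot A hA
  obtain ⟨b, hb⟩ := exists_chainC_eq_bot B hB
  set BB : ℕ → Subgroup G := chainE A with hBB
  set CC : ℕ → Subgroup G := chainE B with hCC
  have hBBnormal : ∀ i, (BB i).Normal := chainE_normal A
  have hCCnormal : ∀ i, (CC i).Normal := chainE_normal B
  have hBBA : ∀ i, ⁅BB i, A⁆ ≤ BB (i + 1) := chainE_comm A
  have hCCB : ∀ i, ⁅CC i, B⁆ ≤ CC (i + 1) := chainE_comm B
  -- the main invariant
  have key : ∀ n, chainC (A ⊔ B) n ≤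
      ⨆ p ∈ Finset.range (n + 2), BB p ⊓ CC (n + 1 - p) := by
    intro n
    induction n with
    | zero =>
        refine sup_le ?_ ?_
        · refine le_trans (le_inf ?_ ?_) (le_iSup₂ (f := fun p _ => BB p ⊓ CC (1 - p)) 1 (by simp))
          · exact le_rfl
          · exact le_top
        · refine le_trans (le_inf ?_ ?_) (le_iSup₂ (f := fun p _ => BB p ⊓ CC (1 - p)) 0 (by simp))
          · exact le_top
          · exact le_rfl
    | succ n ih =>
        show ⁅chainC (A ⊔ B) n, A ⊔ B⁆ ≤ _
        haveI : (⨆ p ∈ Finset.range (n + 3), BB p ⊓ CC (n + 2 - p)).Normal :=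
          normal_iSup_of fun p => normal_iSup_of fun _ => by
            haveI := hBBnormal p; haveI := hCCnormal (n + 2 - p)
            exact Subgroup.normal_inf_normal _ _
        refine le_trans (Subgroup.commutator_mono ih le_rfl) ?_
        refine commutator_iSup_left_le _ _ _ fun p => ?_
        refine commutator_iSup_left_le _ _ _ fun hp => ?_
        have hp' : p ≤ n + 1 := by
          have := Finset.mem_range.mp hp; omega
        refine commutator_sup_right_le ?_ ?_
        · -- commutator with A : B-degree stays, A-degree goes up
          refine le_trans ?_ (le_iSup₂ (f := fun q _ => BB q ⊓ CC (n + 2 - q)) (p + 1)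
            (Finset.mem_range.mpr (by omega)))
          have h1 : ⁅BB p ⊓ CC (n + 1 - p), A⁆ ≤ BB (p + 1) :=
            le_trans (Subgroup.commutator_mono inf_le_left le_rfl) (hBBA p)
          have h2 : ⁅BB p ⊓ CC (n + 1 - p), A⁆ ≤ CC (n + 1 - p) := by
            haveI := hCCnormal (n + 1 - p)
            exact le_trans (Subgroup.commutator_mono inf_le_right le_rfl)
              (Subgroup.commutator_le_left _ _)
          have hq : n + 2 - (p + 1) = n + 1 - p := by omega
          rw [hq]
          exact le_inf h1 h2
        · -- commutator with B : A-degree stays, B-degree goes up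
          refine le_trans ?_ (le_iSup₂ (f := fun q _ => BB q ⊓ CC (n + 2 - q)) p
            (Finset.mem_range.mpr (by omega)))
          have h1 : ⁅BB p ⊓ CC (n + 1 - p), B⁆ ≤ BB p := by
            haveI := hBBnormal p
            exact le_trans (Subgroup.commutator_mono inf_le_left le_rfl)
              (Subgroup.commutator_le_left _ _)
          have h2 : ⁅BB p ⊓ CC (n + 1 - p), B⁆ ≤ CC (n + 2 - p) := by
            have hq : n + 2 - p = (n + 1 - p) + 1 := by omega
            rw [hq]
            exact le_trans (Subgroup.commutator_mono inf_le_right le_rfl) (hCCB _)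
          exact le_inf h1 h2
  -- termination
  refine isNilpotent_of_chainC_eq_bot _ (a + b + 1) (le_bot_iff.mp ?_)
  refine le_trans (key (a + b + 1)) ?_
  refine iSup₂_le fun p hp => ?_
  rcases le_or_gt p a with hpa | hpa
  · -- then the B-degree is large
    have h1 : a + b + 2 - p ≥ b + 2 := by omega
    have : CC (a + b + 2 - p) = ⊥ := by
      obtain ⟨q, hq⟩ : ∃ q, a + b + 2 - p = q + 1 := ⟨a + b + 1 - p, by omega⟩
      rw [hq]
      exact chainC_eq_bot_of_le B hb (by omega)
    rw [this]
    simp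
  · have : BB p = ⊥ := by
      obtain ⟨q, hq⟩ : ∃ q, p = q + 1 := ⟨p - 1, by omega⟩
      rw [hq]
      exact chainC_eq_bot_of_le A ha (by omega)
    rw [this]
    simp

/-! ### Hall's nilpotency criterion -/

/-- The descending chain `[N, G, G, …, G] ⊔ [N,N]`. -/
def chainV (N : Subgroup G) (k : ℕ) : Subgroup G := chainT N k ⊔ ⁅N, N⁆

/-- The family of subgroups used in P. Hall's proof: `chainU N i s` is generated by
left-normed commutators of `i+1` entries from the chains `chainV N _`, with indices
summing to at least `s`. -/
def chainU (N : Subgroup G) : ℕ → ℕ → Subgroup G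
  | 0, s => chainV N s
  | i + 1, s => ⨆ t ∈ Finset.range (s + 1), ⁅chainU N i (s - t), chainV N t⁆

variable (N : Subgroup G) [N.Normal]

theorem chainV_normal (k : ℕ) : (chainV N k).Normal := by
  haveI := chainT_normal N k
  exact Subgroup.sup_normal _ _

theorem chainV_le_N (k : ℕ) : chainV N k ≤ N :=
  sup_le (le_trans (chainT_antitone N (Nat.zero_le k)) le_rfl)
    (Subgroup.commutator_le_right _ _)

theorem chainV_zero : chainV N 0 = N :=
  sup_eq_left.mpr (Subgroup.commutator_le_right _ _)

theorem chainV_succ_le (k : ℕ) : chainV N (k + 1) ≤ chainV N k :=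
  sup_le_sup_right (chainT_succ_le N k) _

theorem chainV_antitone : Antitone (chainV N) :=
  antitone_nat_of_succ_le (chainV_succ_le N)

theorem chainV_comm_top (k : ℕ) : ⁅chainV N k, ⊤⁆ ≤ chainV N (k + 1) := by
  haveI := chainV_normal N (k + 1)
  refine commutator_sup_left_le ?_ ?_
  · exact le_sup_left
  · refine le_trans (Subgroup.commutator_le_left _ _) le_sup_right

theorem chainU_normal : ∀ i s, (chainU N i s).Normal
  | 0, s => chainV_normal N s
  | i + 1, s => normal_iSup_of fun t => normal_iSup_of fun _ => by
      haveI := chainU_normal i (s - t)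
      haveI := chainV_normal N t
      exact Subgroup.commutator_normal _ _

theorem chainU_le_chainC : ∀ i s, chainU N i s ≤ chainC N i
  | 0, s => chainV_le_N N s
  | i + 1, s => iSup₂_le fun t _ =>
      Subgroup.commutator_mono (chainU_le_chainC i (s - t)) (chainV_le_N N t)

theorem chainU_zero : ∀ i, chainU N i 0 = chainC N i
  | 0 => chainV_zero N
  | i + 1 => by
      show ⨆ t ∈ Finset.range 1, ⁅chainU N i (0 - t), chainV N t⁆ = chainC N (i + 1)
      refine le_antisymm (iSup₂_le fun t ht => ?_)
        (le_trans ?_ (le_iSup₂ (f := fun t _ => ⁅chainU N i (0 - t), chainV N t⁆) 0 (by simp)))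
      · have : t = 0 := by simpa using ht
        subst this
        rw [chainU_zero i, chainV_zero N]
        exact le_rfl
      · rw [chainU_zero i, chainV_zero N]
        exact le_rfl

theorem chainU_succ_le : ∀ i s, chainU N i (s + 1) ≤ chainU N i s
  | 0, s => chainV_succ_le N s
  | i + 1, s => by
      refine iSup₂_le fun t ht => ?_
      have ht' : t ≤ s + 1 := by have := Finset.mem_range.mp ht; omega
      rcases Nat.lt_or_ge t (s + 1) with h | h
      · have hsub : s + 1 - t = (s - t) + 1 := by omega
        rw [hsub]
        refine le_trans (Subgroup.commutator_mono (chainU_succ_le i (s - t)) le_rfl) ?_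
        exact le_iSup₂ (f := fun t _ => ⁅chainU N i (s - t), chainV N t⁆) t
          (Finset.mem_range.mpr (by omega))
      · have ht1 : t = s + 1 := by omega
        subst ht1
        have hsub : s + 1 - (s + 1) = 0 := by omega
        rw [hsub]
        refine le_trans (Subgroup.commutator_mono le_rfl (chainV_succ_le N s)) ?_
        refine le_trans ?_ (le_iSup₂ (f := fun t _ => ⁅chainU N i (s - t), chainV N t⁆) s
          (Finset.mem_range.mpr (by omega)))
        rw [Nat.sub_self]

theorem chainU_antitone (i : ℕ) : Antitone (chainU N i) :=
  antitone_nat_of_succ_le (chainU_succ_le N i)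

theorem chainU_comm_chainV (i s t : ℕ) :
    ⁅chainU N i s, chainV N t⁆ ≤ chainU N (i + 1) (s + t) := by
  refine le_trans ?_ (le_iSup₂ (f := fun t' _ => ⁅chainU N i (s + t - t'), chainV N t'⁆) t
    (Finset.mem_range.mpr (by omega)))
  rw [Nat.add_sub_cancel]

theorem chainC_comm_chainC : ∀ j i, ⁅chainC N i, chainC N j⁆ ≤ chainC N (i + j + 1)
  | 0, i => by
      show ⁅chainC N i, N⁆ ≤ chainC N (i + 0 + 1)
      exact le_rfl
  | j + 1, i => by
      haveI := chainC_normal N (i + (j + 1) + 1)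
      refine le_trans (commutator_comm _ _).le ?_
      show ⁅⁅chainC N j, N⁆, chainC N i⁆ ≤ _
      refine commutator_commutator_le_of_rotate ?_ ?_
      · -- ⁅⁅N, chainC i⁆, chainC j⁆
        refine le_trans (Subgroup.commutator_mono (commutator_comm _ _).le le_rfl) ?_
        have : ⁅(⁅chainC N i, N⁆ : Subgroup G), chainC N j⁆ ≤ chainC N ((i + 1) + j + 1) :=
          chainC_comm_chainC j (i + 1)
        refine le_trans this (le_of_eq (congrArg (chainC N) (by omega)))
      · -- ⁅⁅chainC i, chainC j⁆, N⁆
        refine le_trans (Subgroup.commutator_mono (chainC_comm_chainC j i) le_rfl) ?_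
        show chainC N ((i + j + 1) + 1) ≤ chainC N (i + (j + 1) + 1)
        exact le_of_eq (congrArg (chainC N) (by omega))

theorem chainC_one : chainC N 1 = ⁅N, N⁆ := rfl

theorem chainU_comm_top : ∀ i s, ⁅chainU N i s, ⊤⁆ ≤ chainU N i (s + 1) ⊔ chainC N (i + 1)
  | 0, s => le_trans (chainV_comm_top N s) le_sup_left
  | i + 1, s => by
      haveI := chainU_normal N (i + 1) (s + 1)
      haveI := chainC_normal N (i + 2)
      haveI : (chainU N (i + 1) (s + 1) ⊔ chainC N (i + 1 + 1)).Normal :=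
        Subgroup.sup_normal _ _
      show ⁅⨆ t ∈ Finset.range (s + 1), ⁅chainU N i (s - t), chainV N t⁆, ⊤⁆ ≤ _
      refine commutator_iSup_left_le _ _ _ fun t => ?_
      refine commutator_iSup_left_le _ _ _ fun ht => ?_
      have ht' : t ≤ s := by have := Finset.mem_range.mp ht; omega
      refine commutator_commutator_le_of_rotate ?_ ?_
      · -- ⁅⁅chainV t, ⊤⁆, chainU i (s-t)⁆
        refine le_trans (Subgroup.commutator_mono (chainV_comm_top N t) le_rfl) ?_
        refine le_trans (commutator_comm _ _).le ?_
        refine le_trans (chainU_comm_chainV N i (s - t) (t + 1)) ?_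
        have : s - t + (t + 1) = s + 1 := by omega
        rw [this]
        exact le_sup_left
      · -- ⁅⁅⊤, chainU i (s-t)⁆, chainV t⁆
        refine le_trans (Subgroup.commutator_mono (commutator_comm _ _).le le_rfl) ?_
        refine le_trans (Subgroup.commutator_mono (chainU_comm_top i (s - t)) le_rfl) ?_
        refine commutator_sup_left_le ?_ ?_
        · refine le_trans (chainU_comm_chainV N i (s - t + 1) t) ?_
          have : s - t + 1 + t = s + 1 := by omega
          rw [this]
          exact le_sup_left
        · refine le_trans (Subgroup.commutator_mono le_rfl (chainV_le_N N t)) ?_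
          refine le_trans ?_ le_sup_right
          show ⁅chainC N (i + 1), N⁆ ≤ chainC N (i + 1 + 1)
          exact le_rfl

theorem chainU_term {d : ℕ} (hd : chainV N d ≤ ⁅N, N⁆) :
    ∀ i, chainU N i (d * (i + 1)) ≤ chainC N (i + 1)
  | 0 => by
      show chainV N (d * 1) ≤ chainC N 1
      rw [mul_one, chainC_one]
      exact hd
  | i + 1 => by
      refine iSup₂_le fun t ht => ?_
      have hs : d * (i + 1 + 1) = d * (i + 1) + d := by ring
      rcases Nat.lt_or_ge t d with h | h
      · -- small t : use termination for i
        have h1 : d * (i + 1) ≤ d * (i + 1 + 1) - t := by omega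
        refine le_trans (Subgroup.commutator_mono
          (le_trans (chainU_antitone N i h1) (chainU_term hd i)) (chainV_le_N N t)) ?_
        show ⁅chainC N (i + 1), N⁆ ≤ chainC N (i + 1 + 1)
        exact le_rfl
      · -- large t : `chainV t ≤ [N,N]`
        have h1 : chainV N t ≤ chainC N 1 := by
          rw [chainC_one]
          exact le_trans (chainV_antitone N h) hd
        refine le_trans (Subgroup.commutator_mono (chainU_le_chainC N i _) h1) ?_
        refine le_trans (chainC_comm_chainC N 1 i) ?_
        exact le_of_eq (congrArg (chainC N) (by omega))

/-- **P. Hall's nilpotency criterion**: if `N` is a nilpotent normal subgroup of `G` and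
`G⧸[N,N]` is nilpotent, then `G` is nilpotent. -/
theorem hall (hN : Group.IsNilpotent ↥N)
    (hQ : Group.IsNilpotent (G ⧸ (⁅N, N⁆ : Subgroup G))) : Group.IsNilpotent G := by
  obtain ⟨d, hd⟩ := _root_.nilpotent_iff_lowerCentralSeries.mp hQ
  have hdG : Subgroup.lowerCentralSeries (⊤ : Subgroup G) d ≤ ⁅N, N⁆ := by
    have h1 := _root_.lowerCentralSeries.map (QuotientGroup.mk' (⁅N, N⁆ : Subgroup G)) d
    rw [hd, le_bot_iff, Subgroup.map_eq_bot_iff, QuotientGroup.ker_mk'] at h1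
    exact h1
  have hVd : chainV N d ≤ ⁅N, N⁆ := sup_le (le_trans (chainT_le_lcs N d) hdG) le_rfl
  -- main induction : the lower central series of `G` eventually enters every `chainC N j`
  have main : ∀ j, ∃ n, Subgroup.lowerCentralSeries (⊤ : Subgroup G) n ≤ chainC N (j + 1) := by
    intro j
    induction j with
    | zero => exact ⟨d, by rw [chainC_one]; exact hdG⟩
    | succ j ih =>
        obtain ⟨n, hn⟩ := ih
        have aux : ∀ s, Subgroup.lowerCentralSeries (⊤ : Subgroup G) (n + s) ≤
            chainU N (j + 1) s ⊔ chainC N (j + 2) := by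
          intro s
          induction s with
          | zero =>
              refine le_trans hn ?_
              rw [← chainU_zero N (j + 1)]
              exact le_sup_left
          | succ s ihs =>
              haveI := chainU_normal N (j + 1) (s + 1)
              haveI := chainC_normal N (j + 2)
              haveI : (chainU N (j + 1) (s + 1) ⊔ chainC N (j + 2)).Normal :=
                Subgroup.sup_normal _ _
              show ⁅Subgroup.lowerCentralSeries (⊤ : Subgroup G) (n + s), ⊤⁆ ≤ _
              refine le_trans (Subgroup.commutator_mono ihs le_rfl) ?_
              refine commutator_sup_left_le ?_ ?_
              · exact le_trans (chainU_comm_top N (j + 1) s)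
                  (sup_le_sup_left (le_of_eq (congrArg (chainC N) (by omega))) _)
              · exact le_trans (Subgroup.commutator_le_left _ _) le_sup_right
        refine ⟨n + d * (j + 2), ?_⟩
        refine le_trans (aux (d * (j + 2))) (sup_le ?_ le_rfl)
        exact chainU_term N hVd (j + 1)
  obtain ⟨m, hm⟩ := exists_chainC_eq_bot N hN
  obtain ⟨n, hn⟩ := main m
  rw [_root_.nilpotent_iff_lowerCentralSeries]
  refine ⟨n, le_bot_iff.mp (le_trans hn ?_)⟩
  rw [chainC_eq_bot_of_le N hm (Nat.le_succ m)]

end HallFitting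

/-- If `G` is polycyclic, `H = Fitt(G)` is its Fitting subgroup, and `G/[H,H]` is
virtually nilpotent, then `G` is virtually nilpotent. -/
theorem virt_nilp_of_quotient_by_derived_fitting {G : Type*} [Group G]
    (hpoly : IsPolycyclic G)
    (H : Subgroup G) [H.Normal] (hHnilp : Group.IsNilpotent H)
    (hHmax : ∀ K : Subgroup G, K.Normal → Group.IsNilpotent K → K ≤ H)
    (hquot : IsVirtuallyNilpotent (G ⧸ (⁅H, H⁆ : Subgroup G))) :
    IsVirtuallyNilpotent G := by
  classical
  set H' : Subgroup G := ⁅H, H⁆ with hH'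
  let π : G →* G ⧸ H' := QuotientGroup.mk' H'
  have hπsurj : Function.Surjective π := QuotientGroup.mk'_surjective H'
  obtain ⟨Kbar, hKfin, hKnilp⟩ := hquot
  -- the normal core of Kbar
  set Nbar : Subgroup (G ⧸ H') := Kbar.normalCore with hNbar
  haveI : Nbar.Normal := Subgroup.normalCore_normal Kbar
  haveI : Kbar.FiniteIndex := hKfin
  haveI hNfin : Nbar.FiniteIndex := Subgroup.finiteIndex_normalCore Kbar
  have hNnilp : Group.IsNilpotent ↥Nbar := by
    haveI : Group.IsNilpotent ↥Kbar := hKnilp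
    exact nilpotent_of_mulEquiv
      (Subgroup.subgroupOfEquivOfLe (Subgroup.normalCore_le Kbar))
  -- the image of H
  set Hbar : Subgroup (G ⧸ H') := H.map π with hHbar
  haveI : Hbar.Normal := Subgroup.Normal.map ‹H.Normal› π hπsurj
  have hHbarnilp : Group.IsNilpotent ↥Hbar := by
    haveI : Group.IsNilpotent ↥H := hHnilp
    exact nilpotent_of_surjective (π.subgroupMap H) (π.subgroupMap_surjective H)
  -- the Fitting product
  set Fbar : Subgroup (G ⧸ H') := Hbar ⊔ Nbar with hFbar
  haveI : Fbar.Normal := Subgroup.sup_normal _ _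
  have hFnilp : Group.IsNilpotent ↥Fbar := HallFitting.fitting Hbar Nbar hHbarnilp hNnilp
  haveI hFfin : Fbar.FiniteIndex := Subgroup.finiteIndex_of_le le_sup_right
  -- pull back to G
  set M : Subgroup G := Fbar.comap π with hM
  haveI : M.Normal := Subgroup.Normal.comap ‹Fbar.Normal› π
  haveI hMfin : M.FiniteIndex := by
    constructor
    rw [Subgroup.index_comap_of_surjective Fbar hπsurj]
    exact hFfin.index_ne_zero
  have hH'M : H' ≤ M := by
    intro x hx
    have : π x = 1 := by
      rw [← MonoidHom.mem_ker, QuotientGroup.ker_mk']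
      exact hx
    show π x ∈ Fbar
    rw [this]
    exact Fbar.one_mem
  have hHM : H ≤ M := fun x hx =>
    le_sup_left (α := Subgroup (G ⧸ H')) (Subgroup.mem_map_of_mem π hx)
  -- set up Hall's criterion inside M
  set NM : Subgroup ↥M := H.subgroupOf M with hNM
  haveI : NM.Normal := Subgroup.normal_subgroupOf
  have hNMnilp : Group.IsNilpotent ↥NM := by
    haveI : Group.IsNilpotent ↥H := hHnilp
    exact nilpotent_of_mulEquiv (Subgroup.subgroupOfEquivOfLe hHM).symm
  -- the commutator of NM is the subgroupOf of H'
  have hcomm : (⁅NM, NM⁆ : Subgroup ↥M) = H'.subgroupOf M := by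
    apply Subgroup.map_injective M.subtype_injective
    rw [Subgroup.map_commutator, Subgroup.subgroupOf_map_subtype, Subgroup.subgroupOf_map_subtype,
      inf_eq_left.mpr hHM, inf_eq_left.mpr hH'M]
  -- the quotient of M by this commutator is nilpotent
  have hquotM : Group.IsNilpotent (↥M ⧸ (⁅NM, NM⁆ : Subgroup ↥M)) := by
    let φ : ↥M →* G ⧸ H' := π.comp M.subtype
    have hker : φ.ker = (⁅NM, NM⁆ : Subgroup ↥M) := by
      rw [hcomm, ← MonoidHom.comap_ker, QuotientGroup.ker_mk', Subgroup.comap_subtype]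
    have hrange : φ.range = Fbar := by
      rw [MonoidHom.range_comp, Subgroup.range_subtype]
      exact Subgroup.map_comap_eq_self_of_surjective hπsurj Fbar
    haveI : Group.IsNilpotent ↥φ.range :=
      nilpotent_of_mulEquiv (MulEquiv.subgroupCongr hrange.symm) (_h := hFnilp)
    haveI : Group.IsNilpotent (↥M ⧸ φ.ker) :=
      nilpotent_of_mulEquiv (QuotientGroup.quotientKerEquivRange φ).symm
    exact nilpotent_of_mulEquiv (QuotientGroup.quotientMulEquivOfEq hker)
  -- Hall's criterion : M is nilpotent
  have hMnilp : Group.IsNilpotent ↥M := HallFitting.hall NM hNMnilp hquotM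
  exact ⟨M, hMfin, hMnilp⟩
end

section
/- Let H = ⟨x⟩ ⋉ ℤⁿ where x acts on ℤⁿ by a matrix X ∈ SL_n(ℤ). If H is not virtually nilpotent, then X has a complex eigenvalue of absolute value strictly greater than 1. -/
/-- The automorphism of `ℤⁿ` (written multiplicatively) induced by `X ∈ SL_n(ℤ)`. -/
def sslAut (n : ℕ) (X : Matrix.SpecialLinearGroup (Fin n) ℤ) :
    MulAut (Multiplicative (Fin n → ℤ)) :=
  AddEquiv.toMultiplicative (Matrix.SpecialLinearGroup.toLin' X).toAddEquiv

/-- The action of `ℤ` on `ℤⁿ` by powers of `X`. -/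
def sslAction (n : ℕ) (X : Matrix.SpecialLinearGroup (Fin n) ℤ) :
    Multiplicative ℤ →* MulAut (Multiplicative (Fin n → ℤ)) :=
  zpowersHom _ (sslAut n X)

/-- The semidirect product `H = ℤ ⋉ ℤⁿ`, with `ℤ` acting via `X ∈ SL_n(ℤ)`. -/
def sdp (n : ℕ) (X : Matrix.SpecialLinearGroup (Fin n) ℤ) : Type :=
  SemidirectProduct (Multiplicative (Fin n → ℤ)) (Multiplicative ℤ) (sslAction n X)

instance (n : ℕ) (X : Matrix.SpecialLinearGroup (Fin n) ℤ) : Group (sdp n X) :=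
  SemidirectProduct.instGroup

/-- The generator `x` of the cyclic factor of `ℤ ⋉ ℤⁿ`. -/
def sdpx (n : ℕ) (X : Matrix.SpecialLinearGroup (Fin n) ℤ) : sdp n X :=
  SemidirectProduct.inr (Multiplicative.ofAdd (1 : ℤ))

/-- The standard generator `eᵢ` of the `ℤⁿ` factor of `ℤ ⋉ ℤⁿ`. -/
def sdpe (n : ℕ) (X : Matrix.SpecialLinearGroup (Fin n) ℤ) (i : Fin n) : sdp n X :=
  SemidirectProduct.inl (Multiplicative.ofAdd (Pi.single i (1 : ℤ)))

/-- The generating set `{x, e₁, …, eₙ}` of `ℤ ⋉ ℤⁿ`. -/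
def sdpGens (n : ℕ) (X : Matrix.SpecialLinearGroup (Fin n) ℤ) : Set (sdp n X) :=
  {sdpx n X} ∪ Set.range (sdpe n X)

/-!
If no eigenvalue of `X` lies outside the unit disc, then, since `det X = 1`, the characteristic
polynomial of `X` is a monic integer polynomial of Mahler measure `1` with nonzero roots, so by
Kronecker's theorem all eigenvalues are roots of unity. Hence `Xᵏ - 1` is nilpotent for some
`k > 0`. The subgroup `⟨xᵏ⟩ ⋉ ℤⁿ` has index `k`, and it is nilpotent: the subgroups
`(Xᵏ - 1)ʲ ℤⁿ` form a descending central series reaching the trivial group.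
-/

open Polynomial Matrix SemidirectProduct
open scoped commutatorElement

theorem Polynomial.Monic.mahlerMeasure_eq_one {p : ℂ[X]} (hp : p.Monic)
    (h : ∀ z ∈ p.roots, ‖z‖ ≤ 1) : p.mahlerMeasure = 1 := by
  rw [mahlerMeasure_eq_leadingCoeff_mul_prod_roots, hp.leadingCoeff, norm_one, one_mul]
  refine Multiset.prod_eq_one fun x hx => ?_
  obtain ⟨z, hz, rfl⟩ := Multiset.mem_map.1 hx
  exact max_eq_left (h z hz)

theorem Set.Finite.exists_pos_forall_pow_eq_one {G : Type*} [Monoid G] {s : Set G}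
    (hs : s.Finite) (h : ∀ x ∈ s, IsOfFinOrder x) : ∃ k, 0 < k ∧ ∀ x ∈ s, x ^ k = 1 :=
  ⟨∏ x ∈ hs.toFinset, orderOf x,
    Finset.prod_pos fun _ hx => (h _ (hs.mem_toFinset.1 hx)).orderOf_pos,
    fun _ hx => orderOf_dvd_iff_pow_eq_one.1 (Finset.dvd_prod_of_mem _ (hs.mem_toFinset.2 hx))⟩

theorem Units.exists_commute_zpow_sub_one_eq_mul {R : Type*} [Ring R] (u : Rˣ) (m : ℤ) :
    ∃ q : R, Commute (u : R) q ∧ ((u ^ m : Rˣ) : R) - 1 = (u - 1) * q := by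
  induction m using Int.induction_on with
  | zero => exact ⟨0, Commute.zero_right _, by simp⟩
  | succ i ih =>
    obtain ⟨q, hc, hq⟩ := ih
    refine ⟨q * u + 1, (hc.mul_right (Commute.refl _)).add_right (Commute.one_right _), ?_⟩
    rw [_root_.zpow_add_one, Units.val_mul, eq_add_of_sub_eq hq]
    noncomm_ring
  | pred i ih =>
    obtain ⟨q, hc, hq⟩ := ih
    refine ⟨q * ↑u⁻¹ - ↑u⁻¹,
      (hc.mul_right (Commute.refl _).units_inv_right).sub_right
        (Commute.refl _).units_inv_right, ?_⟩
    rw [_root_.zpow_sub_one, Units.val_mul, eq_add_of_sub_eq hq, mul_sub,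
      sub_mul (u : R) 1 ↑u⁻¹, Units.mul_inv]
    noncomm_ring

theorem SemidirectProduct.commutatorElement_inl {N G : Type*} [CommGroup N] [Group G]
    {φ : G →* MulAut N} (a : N) (y : N ⋊[φ] G) :
    ⁅(inl a : N ⋊[φ] G), y⁆ = (inl (a / φ y.right a) : N ⋊[φ] G) := by
  ext
  · simp [commutatorElement_def, div_eq_mul_inv, mul_comm, mul_left_comm]
  · simp [commutatorElement_def, div_eq_mul_inv]

namespace Matrix

variable {ι : Type*} [Fintype ι] [DecidableEq ι]

theorem mem_spectrum_map_iff_mem_aroots (A : Matrix ι ι ℤ) {z : ℂ} :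
    z ∈ spectrum ℂ (A.map (Int.cast : ℤ → ℂ)) ↔ z ∈ A.charpoly.aroots ℂ := by
  rw [mem_spectrum_iff_isRoot_charpoly, mem_aroots, aeval_def, eval₂_eq_eval_map,
    ← charpoly_map, and_iff_right A.charpoly_monic.ne_zero]
  rfl

theorem exists_pow_eq_one_of_mem_spectrum {A : Matrix ι ι ℤ} (hA : IsUnit A)
    (h : ∀ z ∈ spectrum ℂ (A.map (Int.cast : ℤ → ℂ)), ‖z‖ ≤ 1)
    {z : ℂ} (hz : z ∈ spectrum ℂ (A.map (Int.cast : ℤ → ℂ))) :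
    ∃ k, 0 < k ∧ z ^ k = 1 := by
  have hmahler : (A.charpoly.map (Int.castRingHom ℂ)).mahlerMeasure = 1 :=
    (A.charpoly_monic.map _).mahlerMeasure_eq_one fun w hw =>
      h w ((mem_spectrum_map_iff_mem_aroots A).2 hw)
  have hz₀ : z ≠ 0 := by
    rintro rfl
    exact spectrum.zero_notMem ℂ (hA.map (Int.castRingHom ℂ).mapMatrix) hz
  exact pow_eq_one_of_mahlerMeasure_eq_one hmahler hz₀ ((mem_spectrum_map_iff_mem_aroots A).1 hz)

theorem isNilpotent_pow_sub_one_of_forall_mem_spectrum {K : Type*} [Field K] [IsAlgClosed K]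
    {M : Matrix ι ι K} {k : ℕ} (h : ∀ z ∈ spectrum K M, z ^ k = 1) :
    IsNilpotent (M ^ k - 1) := by
  set p := M.charpoly
  have hdvd : p ∣ (X ^ k - 1) ^ p.roots.card := by
    have : (p.roots.map fun z => X - C z).prod ∣ (p.roots.map fun _ => (X ^ k - 1 : K[X])).prod :=
      Multiset.prod_dvd_prod_of_dvd _ _ fun z hz => by
        rw [dvd_iff_isRoot, IsRoot.def, eval_sub, eval_pow, eval_X, eval_one, sub_eq_zero]
        exact h z (mem_spectrum_iff_isRoot_charpoly.2 (isRoot_of_mem_roots hz))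
    rwa [← (IsAlgClosed.splits p).eq_prod_roots_of_monic M.charpoly_monic, Multiset.map_const',
      Multiset.prod_replicate] at this
  obtain ⟨q, hq⟩ := hdvd
  exact ⟨p.roots.card, by simpa [p, aeval_self_charpoly] using congrArg (aeval M) hq⟩

theorem exists_isNilpotent_pow_sub_one {A : Matrix ι ι ℤ} (hA : IsUnit A)
    (h : ∀ z ∈ spectrum ℂ (A.map (Int.cast : ℤ → ℂ)), ‖z‖ ≤ 1) :
    ∃ k, 0 < k ∧ IsNilpotent (A ^ k - 1) := by
  obtain ⟨k, hk, hpow⟩ :=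
    (A.map (Int.cast : ℤ → ℂ)).finite_spectrum.exists_pos_forall_pow_eq_one fun z hz =>
      isOfFinOrder_iff_pow_eq_one.2 (exists_pow_eq_one_of_mem_spectrum hA h hz)
  refine ⟨k, hk, ?_⟩
  rw [← IsNilpotent.map_iff (f := (Int.castRingHom ℂ).mapMatrix)
    (map_injective Int.cast_injective), map_sub, map_pow, map_one]
  exact isNilpotent_pow_sub_one_of_forall_mem_spectrum hpow

variable {R : Type*} [CommRing R]

theorem zpow_mulVec_sub_mem_range (u : GL ι R) (m : ℤ) {j : ℕ} {v : ι → R}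
    (hv : v ∈ LinearMap.range (toLin' ((u - 1 : Matrix ι ι R) ^ j))) :
    (↑(u ^ m) : Matrix ι ι R) *ᵥ v - v ∈
      LinearMap.range (toLin' ((u - 1 : Matrix ι ι R) ^ (j + 1))) := by
  obtain ⟨w, rfl⟩ := hv
  obtain ⟨q, hc, hq⟩ := u.exists_commute_zpow_sub_one_eq_mul m
  have key : ((u : Matrix ι ι R) - 1) ^ (j + 1) * q = (↑(u ^ m) - 1) * (u - 1) ^ j := by
    rw [hq, pow_succ', mul_assoc, mul_assoc, ((hc.sub_left (Commute.one_left q)).pow_left j).eq]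
  refine ⟨q *ᵥ w, ?_⟩
  rw [toLin'_apply, toLin'_apply, mulVec_mulVec, mulVec_mulVec, key, sub_mul, one_mul, sub_mulVec]

end Matrix

def sslAutHom (n : ℕ) :
    Matrix.SpecialLinearGroup (Fin n) ℤ →* MulAut (Multiplicative (Fin n → ℤ)) where
  toFun := sslAut n
  map_one' := by ext v; simp [sslAut]
  map_mul' Y Z := by ext v; simp [sslAut]

theorem sslAction_apply (n : ℕ) (Y : Matrix.SpecialLinearGroup (Fin n) ℤ)
    (g : Multiplicative ℤ) (v : Fin n → ℤ) :
    sslAction n Y g (.ofAdd v) =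
      .ofAdd ((↑(Y ^ g.toAdd) : Matrix (Fin n) (Fin n) ℤ) *ᵥ v) := by
  rw [sslAction, zpowersHom_apply, show sslAut n Y = sslAutHom n Y from rfl, ← map_zpow]
  rfl

section Nilpotent

variable {n : ℕ} (Y : Matrix.SpecialLinearGroup (Fin n) ℤ)

-- `sdp n Y` unfolded, so that the `SemidirectProduct` API applies without coercions
local notation "H" => Multiplicative (Fin n → ℤ) ⋊[sslAction n Y] Multiplicative ℤ

def sdpFiltration (j : ℕ) : Subgroup H :=
  (AddSubgroup.toSubgroup
    (LinearMap.range (toLin' (((Y : Matrix (Fin n) (Fin n) ℤ) - 1) ^ j))).toAddSubgroup).map inl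

theorem commutator_le_sdpFiltration_zero : commutator H ≤ sdpFiltration Y 0 := by
  refine (Abelianization.commutator_subset_ker (rightHom : H →* _)).trans fun x hx => ?_
  rw [← range_inl_eq_ker_rightHom] at hx
  obtain ⟨a, rfl⟩ := hx
  exact ⟨a, ⟨a.toAdd, by simp⟩, rfl⟩

theorem commutatorElement_mem_sdpFiltration {j : ℕ} {x : H} (hx : x ∈ sdpFiltration Y j)
    (y : H) : ⁅x, y⁆ ∈ sdpFiltration Y (j + 1) := by
  obtain ⟨a, ha, rfl⟩ := hx
  rw [commutatorElement_inl]
  refine Subgroup.mem_map_of_mem _ ?_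
  have hmem := zpow_mulVec_sub_mem_range (Matrix.SpecialLinearGroup.toGL Y) y.right.toAdd ha
  rw [← map_zpow] at hmem
  suffices a.toAdd - (sslAction n Y y.right a).toAdd ∈
      LinearMap.range (toLin' (((Y : Matrix (Fin n) (Fin n) ℤ) - 1) ^ (j + 1))) from this
  rw [show sslAction n Y y.right a = _ from sslAction_apply n Y y.right a.toAdd, toAdd_ofAdd,
    ← neg_mem_iff, neg_sub]
  exact hmem

theorem isNilpotent_sdp_of_isNilpotent_sub_one
    (h : IsNilpotent ((Y : Matrix (Fin n) (Fin n) ℤ) - 1)) : Group.IsNilpotent (sdp n Y) := by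
  obtain ⟨d, hd⟩ := h
  have hlcs : ∀ j,
      Subgroup.lowerCentralSeries (⊤ : Subgroup H) (j + 1) ≤ sdpFiltration Y j := by
    intro j
    induction j with
    | zero => exact commutator_le_sdpFiltration_zero Y
    | succ j ih =>
      exact Subgroup.commutator_le.2 fun x hx y _ =>
        commutatorElement_mem_sdpFiltration Y (ih hx) y
  have hbot : sdpFiltration Y d = ⊥ := by simp [sdpFiltration, hd]
  exact Subgroup.nilpotent_iff_lowerCentralSeries.2 ⟨d + 1, eq_bot_iff.2 (hbot ▸ hlcs d)⟩

end Nilpotent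

section Power

variable {n : ℕ} (X : Matrix.SpecialLinearGroup (Fin n) ℤ) (k : ℕ)

def sdpPowHom : sdp n (X ^ k) →* sdp n X :=
  SemidirectProduct.map (MonoidHom.id _) (powMonoidHom k) fun g => by
    refine MonoidHom.ext fun v => ?_
    change sslAction n (X ^ k) g (.ofAdd v.toAdd) = sslAction n X (g ^ k) (.ofAdd v.toAdd)
    rw [sslAction_apply, sslAction_apply, toAdd_pow, ← zpow_natCast, ← _root_.zpow_mul,
      nsmul_eq_mul]

theorem finiteIndex_range_sdpPowHom (hk : k ≠ 0) : (sdpPowHom X k).range.FiniteIndex := by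
  have hpow : (powMonoidHom k : Multiplicative ℤ →* Multiplicative ℤ).range.FiniteIndex := by
    constructor
    rw [show (powMonoidHom k).range =
        AddSubgroup.toSubgroup (nsmulAddMonoidHom k : ℤ →+ ℤ).range from rfl,
      AddSubgroup.index_toSubgroup, AddSubgroup.index_range_nsmul]
    simpa using hk
  have hcomap : ((powMonoidHom k).range.comap (rightHom : sdp n X →* _)).FiniteIndex :=
    ⟨by rw [Subgroup.index_comap_of_surjective _ rightHom_surjective]; exact hpow.index_ne_zero⟩
  refine Subgroup.finiteIndex_of_le (H := (powMonoidHom k).range.comap rightHom) ?_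
  rintro x ⟨g, hg⟩
  exact ⟨⟨x.left, g⟩, SemidirectProduct.ext rfl hg⟩

theorem isVirtuallyNilpotent_sdp_of_isNilpotent_pow_sub_one (hk : k ≠ 0)
    (h : IsNilpotent ((X : Matrix (Fin n) (Fin n) ℤ) ^ k - 1)) :
    IsVirtuallyNilpotent (sdp n X) := by
  have := isNilpotent_sdp_of_isNilpotent_sub_one (X ^ k)
    (by rwa [Matrix.SpecialLinearGroup.coe_pow])
  exact ⟨_, finiteIndex_range_sdpPowHom X k hk,
    Group.nilpotent_of_surjective _ (sdpPowHom X k).rangeRestrict_surjective⟩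

end Power

/-- Proposition 2: if `H = ℤ ⋉ ℤⁿ` (with `ℤ` acting via `X ∈ SL_n(ℤ)`) is not
virtually nilpotent, then `X` has a complex eigenvalue of absolute value `> 1`. -/
theorem eigenvalue_gt_one_of_not_virtually_nilpotent (n : ℕ)
    (X : Matrix.SpecialLinearGroup (Fin n) ℤ)
    (hnvn : ¬ IsVirtuallyNilpotent (sdp n X)) :
    ∃ μ ∈ spectrum ℂ ((X : Matrix (Fin n) (Fin n) ℤ).map (Int.cast : ℤ → ℂ)),
      1 < ‖μ‖ := by
  contrapose! hnvn
  obtain ⟨k, hk, hnil⟩ :=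
    exists_isNilpotent_pow_sub_one (Matrix.SpecialLinearGroup.toGL X).isUnit hnvn
  exact isVirtuallyNilpotent_sdp_of_isNilpotent_pow_sub_one X k hk.ne' hnil
end

section
/- In the free nilpotent group N_{r,c} of class c, for any iterated commutators s of weight k and t of weight l with k + l ≤ c built from the generators, the identity ts = st·u holds, where u is a product of iterated commutators of the generators of weight at least k + l, and the length of u is bounded by a constant C₀ depending only on c (not on r). -/
/-- The free nilpotent group of rank `r` and class `c`. -/
def FreeNilpotent (r c : ℕ) : Type :=
  FreeGroup (Fin r) ⧸ (⊤ : Subgroup (FreeGroup (Fin r))).lowerCentralSeries c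

noncomputable instance (r c : ℕ) : Group (FreeNilpotent r c) :=
  QuotientGroup.Quotient.group _

/-- The canonical projection from the free group to the free nilpotent group. -/
def freeNilpotentMk (r c : ℕ) : FreeGroup (Fin r) →* FreeNilpotent r c :=
  QuotientGroup.mk' _

open scoped commutatorElement

/-- `iterCommSet f w` is the set of iterated commutators of weight `w` of the
elements `f i`: weight `1` commutators are the `f i` and their inverses, and weight
`w+1` commutators are `[s, f i^{±1}]^{±1}` with `s` of weight `w`. -/
def iterCommSet {H : Type*} [Group H] {k : ℕ} (f : Fin k → H) : ℕ → Set H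
  | 0 => ∅
  | 1 => {h | ∃ i, h = f i ∨ h = (f i)⁻¹}
  | (w + 2) => {h | ∃ s ∈ iterCommSet f (w + 1), ∃ i,
      h = ⁅s, f i⁆ ∨ h = ⁅s, (f i)⁻¹⁆ ∨ h = ⁅s, f i⁆⁻¹ ∨ h = ⁅s, (f i)⁻¹⁆⁻¹}


/-! Let `K m` (`iterCommClosure f m`) be the subgroup generated by the iterated commutators of
weight at least `m` in a group `G` generated by the `f i`, and let `γ i` be the lower central
series, indexed from `γ 0 = G`. `K m` is normal (conjugating `u` by `a` multiplies it by
`⁅u⁻¹, a⁆`), and it contains `γ (m - 1)`: `γ m = ⁅γ (m - 1), G⁆` is generated, modulo the normal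
subgroup `K (m + 1)`, by commutators of generators of `K m` with the `f i`. An iterated commutator
of weight `k` lies in `γ (k - 1)`, and `⁅γ i, γ j⁆ ≤ γ (i + j + 1)` by the three subgroups lemma,
so `⁅t⁻¹, s⁻¹⁆ ∈ K (k + l)`, which is the identity `t * s = s * t * u`.

In the free nilpotent group on `c` generators there are only finitely many pairs `(s, t)` of total
weight at most `c`, which bounds the length of `u`. A pair in the free nilpotent group of rank `r`
involves at most `k + l ≤ c` generators, so it is the image of a pair in rank `c` under a
homomorphism sending generators to generators, and the identity is carried along. -/

namespace Subgroup

variable {G : Type*} [Group G]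

theorem commutator_commutator_le_of_rotate {H₁ H₂ H₃ N : Subgroup G} [N.Normal]
    (h1 : ⁅⁅H₂, H₃⁆, H₁⁆ ≤ N) (h2 : ⁅⁅H₃, H₁⁆, H₂⁆ ≤ N) : ⁅⁅H₁, H₂⁆, H₃⁆ ≤ N := by
  have hquot : ∀ A B C : Subgroup G, ⁅⁅A, B⁆, C⁆ ≤ N ↔
      ⁅⁅A.map (QuotientGroup.mk' N), B.map (QuotientGroup.mk' N)⁆,
        C.map (QuotientGroup.mk' N)⁆ = ⊥ := fun A B C => by
    rw [← map_commutator, ← map_commutator, map_eq_bot_iff, QuotientGroup.ker_mk']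
  rw [hquot] at h1 h2 ⊢
  exact commutator_commutator_eq_bot_of_rotate h1 h2

theorem commutator_closure_le {S T : Set G} {N : Subgroup G} [N.Normal]
    (h : ∀ s ∈ S, ∀ t ∈ T, ⁅s, t⁆ ∈ N) : ⁅closure S, closure T⁆ ≤ N := by
  rw [← QuotientGroup.ker_mk' N, ← map_eq_bot_iff, map_commutator, MonoidHom.map_closure,
    MonoidHom.map_closure, commutator_eq_bot_iff_le_centralizer, centralizer_closure, closure_le]
  rintro _ ⟨s, hs, rfl⟩ _ ⟨t, ht, rfl⟩
  have hst : QuotientGroup.mk' N ⁅s, t⁆ = 1 := (QuotientGroup.eq_one_iff _).mpr (h s hs t ht)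
  rw [map_commutatorElement, commutatorElement_eq_one_iff_mul_comm] at hst
  exact hst.symm

theorem closure_normal_of_conj_mem {S T : Set G} (hT : closure T = ⊤)
    (hT_inv : ∀ a ∈ T, a⁻¹ ∈ T) (h : ∀ a ∈ T, ∀ s ∈ S, a * s * a⁻¹ ∈ closure S) :
    (closure S).Normal := by
  have hconj : ∀ a ∈ T, ∀ x ∈ closure S, a * x * a⁻¹ ∈ closure S := fun a ha x hx =>
    (closure_le ((closure S).comap (MulAut.conj a).toMonoidHom)).mpr (h a ha) hx
  rw [← normalizer_eq_top_iff, eq_top_iff, ← hT, closure_le]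
  refine fun a ha x => ⟨hconj a ha x, fun hx => ?_⟩
  simpa [mul_assoc] using hconj a⁻¹ (hT_inv a ha) _ hx

theorem commutator_lowerCentralSeries_le (i j : ℕ) :
    ⁅(⊤ : Subgroup G).lowerCentralSeries i, (⊤ : Subgroup G).lowerCentralSeries j⁆ ≤
      (⊤ : Subgroup G).lowerCentralSeries (i + j + 1) := by
  induction j generalizing i with
  | zero => rfl
  | succ j ih =>
    rw [lowerCentralSeries_succ, commutator_comm (lowerCentralSeries ⊤ i)]
    apply commutator_commutator_le_of_rotate
    · rw [commutator_comm ⊤, ← lowerCentralSeries_succ]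
      convert ih (i + 1) using 2
      omega
    · exact (commutator_mono (ih i) le_rfl).trans_eq (lowerCentralSeries_succ _ _).symm

end Subgroup

theorem Set.Finite.exists_length_le_of_forall_exists {α β : Type*} {A : Set α} (hA : A.Finite)
    {P : α → List β → Prop} (h : ∀ a ∈ A, ∃ L, P a L) :
    ∃ C : ℕ, ∀ a ∈ A, ∃ L, L.length ≤ C ∧ P a L := by
  choose! F hF using h
  obtain ⟨C, hC⟩ := (hA.image fun a => (F a).length).bddAbove
  exact ⟨C, fun a ha => ⟨F a, hC (Set.mem_image_of_mem _ ha), hF a ha⟩⟩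

theorem exists_fin_range_superset_of_add_le {α : Type*} {a b c : ℕ} (hab : 0 < a + b)
    (hc : a + b ≤ c) (x : Fin a → α) (y : Fin b → α) :
    ∃ σ : Fin c → α, Set.range x ⊆ Set.range σ ∧ Set.range y ⊆ Set.range σ := by
  refine ⟨fun j => Fin.append x y ⟨min j (a + b - 1), by omega⟩, ?_, ?_⟩
  · rintro _ ⟨i, rfl⟩
    refine ⟨⟨i, by omega⟩, ?_⟩
    rw [← Fin.append_left x y i]
    exact congrArg _ (Fin.ext (by simp only [Fin.val_castAdd]; omega))
  · rintro _ ⟨i, rfl⟩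
    refine ⟨⟨a + i, by omega⟩, ?_⟩
    rw [← Fin.append_right x y i]
    exact congrArg _ (Fin.ext (by simp only [Fin.val_natAdd]; omega))

section IterComm

variable {G H : Type*} [Group G] [Group H] {n : ℕ} {f : Fin n → G}

theorem inv_mem_iterCommSet : ∀ {w : ℕ} {u : G}, u ∈ iterCommSet f w → u⁻¹ ∈ iterCommSet f w
  | 1, _, ⟨i, hi⟩ => ⟨i, by rcases hi with rfl | rfl <;> simp⟩
  | _ + 2, _, ⟨s, hs, i, hi⟩ => ⟨s, hs, i, by rcases hi with rfl | rfl | rfl | rfl <;> simp⟩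

theorem pos_of_mem_iterCommSet {w : ℕ} {u : G} (hu : u ∈ iterCommSet f w) : 0 < w := by
  rcases w with _ | w
  exacts [hu.elim, w.succ_pos]

theorem commutatorElement_mem_iterCommSet_succ :
    ∀ {w : ℕ} {u a : G}, u ∈ iterCommSet f w → a ∈ iterCommSet f 1 →
      ⁅u, a⁆ ∈ iterCommSet f (w + 1)
  | 1, _, _, hu, ⟨i, hi⟩ => ⟨_, hu, i, by rcases hi with rfl | rfl <;> simp⟩
  | _ + 2, _, _, hu, ⟨i, hi⟩ => ⟨_, hu, i, by rcases hi with rfl | rfl <;> simp⟩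

theorem iterCommSet_finite : ∀ w : ℕ, (iterCommSet f w).Finite
  | 0 => Set.finite_empty
  | 1 => ((Set.finite_range f).union (Set.finite_range fun i => (f i)⁻¹)).subset <| by
      rintro _ ⟨i, rfl | rfl⟩ <;> simp
  | w + 2 => ((iterCommSet_finite (w + 1)).biUnion fun s _ => Set.finite_iUnion fun i =>
      Set.toFinite {⁅s, f i⁆, ⁅s, (f i)⁻¹⁆, ⁅s, f i⁆⁻¹, ⁅s, (f i)⁻¹⁆⁻¹}).subset <| by
      rintro _ ⟨s, hs, i, hi⟩
      simp only [Set.mem_iUnion]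
      exact ⟨s, hs, i, by simpa using hi⟩

theorem iterCommSet_comp_monoidHom (φ : G →* H) :
    ∀ w : ℕ, iterCommSet (φ ∘ f) w = φ '' iterCommSet f w
  | 0 => (Set.image_empty _).symm
  | 1 => by ext; simp only [iterCommSet, Set.mem_image]; aesop
  | w + 2 => by
    ext u
    simp only [iterCommSet, iterCommSet_comp_monoidHom φ (w + 1), Set.mem_image]
    constructor
    · rintro ⟨_, ⟨s, hs, rfl⟩, i, hi⟩
      simp only [Function.comp_apply, ← map_inv, ← map_commutatorElement] at hi
      rcases hi with rfl | rfl | rfl | rfl <;> exact ⟨_, ⟨s, hs, i, by tauto⟩, rfl⟩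
    · rintro ⟨_, ⟨s, hs, i, hi⟩, rfl⟩
      refine ⟨φ s, ⟨s, hs, rfl⟩, i, ?_⟩
      rcases hi with rfl | rfl | rfl | rfl <;> simp [map_commutatorElement]

theorem iterCommSet_subset_of_range_subset {m : ℕ} {g : Fin m → G}
    (h : Set.range g ⊆ Set.range f) : ∀ {w : ℕ}, iterCommSet g w ⊆ iterCommSet f w
  | 1, _, ⟨i, hi⟩ => by
    obtain ⟨j, hj⟩ := h ⟨i, rfl⟩
    exact ⟨j, hj ▸ hi⟩
  | _ + 2, _, ⟨s, hs, i, hi⟩ => by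
    obtain ⟨j, hj⟩ := h ⟨i, rfl⟩
    exact ⟨s, iterCommSet_subset_of_range_subset h hs, j, hj ▸ hi⟩

theorem exists_reindex_of_mem_iterCommSet :
    ∀ {w : ℕ} {u : G}, u ∈ iterCommSet f w → ∃ ι : Fin w → Fin n, u ∈ iterCommSet (f ∘ ι) w
  | 1, _, ⟨i, hi⟩ => ⟨fun _ => i, 0, hi⟩
  | w + 2, _, ⟨s, hs, i, hi⟩ => by
    obtain ⟨ι, hι⟩ := exists_reindex_of_mem_iterCommSet hs
    have hrange : Set.range (f ∘ ι) ⊆ Set.range (f ∘ Fin.snoc ι i) := by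
      rintro _ ⟨j, rfl⟩
      exact ⟨j.castSucc, by simp⟩
    exact ⟨Fin.snoc ι i, s, iterCommSet_subset_of_range_subset hrange hι, Fin.last _,
      by simpa using hi⟩

theorem iterCommSet_succ_subset_lowerCentralSeries :
    ∀ w : ℕ, iterCommSet f (w + 1) ⊆ (⊤ : Subgroup G).lowerCentralSeries w
  | 0 => fun _ _ => Subgroup.mem_top _
  | w + 1 => by
    rintro _ ⟨s, hs, i, hi⟩
    have hs' := iterCommSet_succ_subset_lowerCentralSeries w hs
    rcases hi with rfl | rfl | rfl | rfl
    all_goals first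
      | exact Subgroup.commutator_mem_commutator hs' (Subgroup.mem_top _)
      | exact inv_mem (Subgroup.commutator_mem_commutator hs' (Subgroup.mem_top _))

theorem closure_iterCommSet_one (hgen : Subgroup.closure (Set.range f) = ⊤) :
    Subgroup.closure (iterCommSet f 1) = ⊤ :=
  eq_top_iff.mpr <| hgen.ge.trans <| Subgroup.closure_mono fun _ ⟨i, hi⟩ => ⟨i, Or.inl hi.symm⟩

def iterCommClosure (f : Fin n → G) (m : ℕ) : Subgroup G :=
  Subgroup.closure {u | ∃ w, m ≤ w ∧ u ∈ iterCommSet f w}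

theorem mem_iterCommClosure_of_mem {m w : ℕ} {u : G} (hw : m ≤ w) (hu : u ∈ iterCommSet f w) :
    u ∈ iterCommClosure f m :=
  Subgroup.subset_closure ⟨w, hw, hu⟩

theorem iterCommClosure_normal (hgen : Subgroup.closure (Set.range f) = ⊤) (m : ℕ) :
    (iterCommClosure f m).Normal := by
  refine Subgroup.closure_normal_of_conj_mem (closure_iterCommSet_one hgen)
    (fun _ => inv_mem_iterCommSet) fun a ha u ⟨w, hw, hu⟩ => ?_
  have hconj : a * u * a⁻¹ = u * ⁅u⁻¹, a⁆ := by group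
  rw [hconj]
  exact mul_mem (mem_iterCommClosure_of_mem hw hu) (mem_iterCommClosure_of_mem (by omega)
    (commutatorElement_mem_iterCommSet_succ (inv_mem_iterCommSet hu) ha))

theorem lowerCentralSeries_le_iterCommClosure (hgen : Subgroup.closure (Set.range f) = ⊤) :
    ∀ m : ℕ, (⊤ : Subgroup G).lowerCentralSeries m ≤ iterCommClosure f (m + 1)
  | 0 => (closure_iterCommSet_one hgen).ge.trans <|
      Subgroup.closure_mono fun _ hu => ⟨1, le_rfl, hu⟩
  | m + 1 => by
    have := iterCommClosure_normal hgen (m + 2)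
    calc (⊤ : Subgroup G).lowerCentralSeries (m + 1)
        = ⁅(⊤ : Subgroup G).lowerCentralSeries m, ⊤⁆ := rfl
      _ ≤ ⁅iterCommClosure f (m + 1), Subgroup.closure (iterCommSet f 1)⁆ :=
        Subgroup.commutator_mono (lowerCentralSeries_le_iterCommClosure hgen m)
          (closure_iterCommSet_one hgen).ge
      _ ≤ iterCommClosure f (m + 2) := Subgroup.commutator_closure_le fun _ ⟨w, hw, hu⟩ _ ha =>
        mem_iterCommClosure_of_mem (by omega) (commutatorElement_mem_iterCommSet_succ hu ha)

theorem commutatorElement_mem_iterCommClosure (hgen : Subgroup.closure (Set.range f) = ⊤)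
    {k l : ℕ} {s t : G} (hs : s ∈ iterCommSet f k) (ht : t ∈ iterCommSet f l) :
    ⁅s, t⁆ ∈ iterCommClosure f (k + l) := by
  obtain ⟨k, rfl⟩ := Nat.exists_eq_add_one.mpr (pos_of_mem_iterCommSet hs)
  obtain ⟨l, rfl⟩ := Nat.exists_eq_add_one.mpr (pos_of_mem_iterCommSet ht)
  have hst := Subgroup.commutator_lowerCentralSeries_le k l <|
    Subgroup.commutator_mem_commutator (iterCommSet_succ_subset_lowerCentralSeries k hs)
      (iterCommSet_succ_subset_lowerCentralSeries l ht)
  convert lowerCentralSeries_le_iterCommClosure hgen _ hst using 2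
  omega

theorem exists_list_of_mem_iterCommClosure {m : ℕ} {u : G} (hu : u ∈ iterCommClosure f m) :
    ∃ L : List G, (∀ x ∈ L, ∃ w, m ≤ w ∧ x ∈ iterCommSet f w) ∧ L.prod = u := by
  set S : Set G := {u | ∃ w, m ≤ w ∧ u ∈ iterCommSet f w}
  have hS : S⁻¹ ⊆ S := fun _ ⟨w, hw, hu⟩ => ⟨w, hw, by simpa using inv_mem_iterCommSet hu⟩
  rw [iterCommClosure, ← Subgroup.mem_toSubmonoid, Subgroup.closure_toSubmonoid,
    Set.union_eq_self_of_subset_right hS] at hu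
  exact Submonoid.exists_list_of_mem_closure hu

theorem exists_commutation_list (hgen : Subgroup.closure (Set.range f) = ⊤) {k l : ℕ} {s t : G}
    (hs : s ∈ iterCommSet f k) (ht : t ∈ iterCommSet f l) :
    ∃ L : List G, (∀ u ∈ L, ∃ w, k + l ≤ w ∧ u ∈ iterCommSet f w) ∧ t * s = s * t * L.prod := by
  obtain ⟨L, hL, hprod⟩ := exists_list_of_mem_iterCommClosure <|
    commutatorElement_mem_iterCommClosure hgen (inv_mem_iterCommSet ht) (inv_mem_iterCommSet hs)
  refine ⟨L, by rwa [add_comm k], ?_⟩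
  rw [hprod, commutatorElement_def]
  group

theorem exists_uniform_commutation_bound (hgen : Subgroup.closure (Set.range f) = ⊤) (c : ℕ) :
    ∃ C : ℕ, ∀ k l : ℕ, k + l ≤ c → ∀ s t : G, s ∈ iterCommSet f k → t ∈ iterCommSet f l →
      ∃ L : List G, L.length ≤ C ∧ (∀ u ∈ L, ∃ w, k + l ≤ w ∧ u ∈ iterCommSet f w) ∧
        t * s = s * t * L.prod := by
  let A : Set (ℕ × ℕ × G × G) :=
    {p | p.1 + p.2.1 ≤ c ∧ p.2.2.1 ∈ iterCommSet f p.1 ∧ p.2.2.2 ∈ iterCommSet f p.2.1}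
  have hU : (⋃ w ∈ Set.Iic c, iterCommSet f w).Finite :=
    (Set.finite_Iic c).biUnion fun w _ => iterCommSet_finite w
  have hA : A.Finite := by
    refine ((Set.finite_Iic c).prod ((Set.finite_Iic c).prod (hU.prod hU))).subset ?_
    rintro ⟨k, l, s, t⟩ ⟨hkl, hs, ht⟩
    exact ⟨Set.mem_Iic.2 (by omega), Set.mem_Iic.2 (by omega),
      Set.mem_biUnion (Set.mem_Iic.2 (by omega)) hs, Set.mem_biUnion (Set.mem_Iic.2 (by omega)) ht⟩
  obtain ⟨C, hC⟩ := hA.exists_length_le_of_forall_exists fun p hp =>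
    exists_commutation_list hgen hp.2.1 hp.2.2
  exact ⟨C, fun k l hkl s t hs ht => hC (k, l, s, t) ⟨hkl, hs, ht⟩⟩

theorem exists_common_reindex {c k l : ℕ} {s t : G} (hs : s ∈ iterCommSet f k)
    (ht : t ∈ iterCommSet f l) (hc : k + l ≤ c) :
    ∃ σ : Fin c → Fin n, s ∈ iterCommSet (f ∘ σ) k ∧ t ∈ iterCommSet (f ∘ σ) l := by
  obtain ⟨ιs, hιs⟩ := exists_reindex_of_mem_iterCommSet hs
  obtain ⟨ιt, hιt⟩ := exists_reindex_of_mem_iterCommSet ht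
  obtain ⟨σ, hsσ, htσ⟩ := exists_fin_range_superset_of_add_le
    (Nat.add_pos_left (pos_of_mem_iterCommSet hs) l) hc ιs ιt
  refine ⟨σ, iterCommSet_subset_of_range_subset ?_ hιs, iterCommSet_subset_of_range_subset ?_ hιt⟩
  · rw [Set.range_comp, Set.range_comp]
    exact Set.image_mono hsσ
  · rw [Set.range_comp, Set.range_comp]
    exact Set.image_mono htσ

end IterComm

theorem closure_range_freeNilpotentMk_of (r c : ℕ) :
    Subgroup.closure (Set.range fun i => freeNilpotentMk r c (FreeGroup.of i)) = ⊤ := by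
  rw [Set.range_comp' (freeNilpotentMk r c) FreeGroup.of, ← MonoidHom.map_closure,
    FreeGroup.closure_range_of]
  exact Subgroup.map_top_of_surjective _ (QuotientGroup.mk'_surjective _)

def FreeNilpotent.map {m n : ℕ} (c : ℕ) (σ : Fin m → Fin n) :
    FreeNilpotent m c →* FreeNilpotent n c :=
  QuotientGroup.map _ _ (FreeGroup.map σ) <| by
    rw [← Subgroup.map_le_iff_le_comap, Subgroup.map_lowerCentralSeries]
    exact Subgroup.lowerCentralSeries_mono c le_top

theorem FreeNilpotent.map_comp_of {m n : ℕ} (c : ℕ) (σ : Fin m → Fin n) :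
    FreeNilpotent.map c σ ∘ (fun i => freeNilpotentMk m c (FreeGroup.of i)) =
      (fun i => freeNilpotentMk n c (FreeGroup.of i)) ∘ σ :=
  rfl

/-- The commutation identity `ts = st·u` in free nilpotent groups of class `c`:
for iterated commutators `s` of weight `k` and `t` of weight `l` with `k + l ≤ c`,
`u` is a product of at most `C₀` iterated commutators of weight at least `k + l`,
where the constant `C₀` depends only on `c` and not on the rank `r`. -/
theorem commutation_identity_uniform_bound (c : ℕ) :
    ∃ C₀ : ℕ, ∀ (r k l : ℕ), 1 ≤ k → 1 ≤ l → k + l ≤ c →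
      ∀ s t : FreeNilpotent r c,
        s ∈ iterCommSet (fun i => freeNilpotentMk r c (FreeGroup.of i)) k →
        t ∈ iterCommSet (fun i => freeNilpotentMk r c (FreeGroup.of i)) l →
        ∃ L : List (FreeNilpotent r c), L.length ≤ C₀ ∧
          (∀ u ∈ L, ∃ w, k + l ≤ w ∧
            u ∈ iterCommSet (fun i => freeNilpotentMk r c (FreeGroup.of i)) w) ∧
          t * s = s * t * L.prod := by
  obtain ⟨C₀, hC₀⟩ := exists_uniform_commutation_bound (closure_range_freeNilpotentMk_of c c) c
  refine ⟨C₀, fun r k l _ _ hkl s t hs ht => ?_⟩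
  obtain ⟨σ, hsσ, htσ⟩ := exists_common_reindex hs ht hkl
  rw [← FreeNilpotent.map_comp_of, iterCommSet_comp_monoidHom] at hsσ htσ
  obtain ⟨s₀, hs₀, rfl⟩ := hsσ
  obtain ⟨t₀, ht₀, rfl⟩ := htσ
  obtain ⟨L, hlen, hL, heq⟩ := hC₀ k l hkl s₀ t₀ hs₀ ht₀
  refine ⟨L.map (FreeNilpotent.map c σ), by simpa using hlen, ?_, ?_⟩
  · simp only [List.mem_map]
    rintro _ ⟨u, hu, rfl⟩
    obtain ⟨w, hw, huw⟩ := hL u hu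
    refine ⟨w, hw, iterCommSet_subset_of_range_subset (Set.range_comp_subset_range σ _) ?_⟩
    rw [← FreeNilpotent.map_comp_of, iterCommSet_comp_monoidHom]
    exact Set.mem_image_of_mem _ huw
  · simp only [← map_list_prod, ← map_mul, heq]
end

section
/- Let α > 1 and A, B > 0 be constants, let λ ≥ 1, and define n₁ = 1 and n_{i+1} = nᵢ + c_{λ,nᵢ} where c_{λ,k} ≤ A + B·log_α(λk) for all k ≥ 1. Then nᵢ ≤ λ⁻¹(λi + C)² for all i ≥ 1, for some constant C ≥ 0 depending only on A, B, α. -/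
set_option maxHeartbeats 1000000 in
/-- Polynomial bound on the sequence `n₁ = 1`, `n_{i+1} = nᵢ + c_{λ,nᵢ}`: if
`c_{λ,k} ≤ A + B log_α(λk)` for all `k ≥ 1`, with `α > 1` and `A, B > 0`, then there
is a constant `C ≥ 0` depending only on `A`, `B`, `α` such that
`nᵢ ≤ λ⁻¹ (λ i + C)²` for all `i ≥ 1` and all `λ ≥ 1`. -/
theorem sequence_polynomial_bound (A B α : ℝ) (hA : 0 < A) (hB : 0 < B)
    (hα : 1 < α) :
    ∃ C : ℝ, 0 ≤ C ∧ ∀ (lam : ℝ), 1 ≤ lam → ∀ (c : ℕ → ℕ),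
      (∀ k : ℕ, 1 ≤ k → (c k : ℝ) ≤ A + B * (Real.log (lam * k) / Real.log α)) →
      ∀ nseq : ℕ → ℕ, nseq 1 = 1 →
        (∀ i : ℕ, 1 ≤ i → nseq (i + 1) = nseq i + c (nseq i)) →
        ∀ i : ℕ, 1 ≤ i → (nseq i : ℝ) ≤ lam⁻¹ * (lam * i + C) ^ 2 := by
  have hL : 0 < Real.log α := Real.log_pos hα
  set L := Real.log α with hLdef
  clear_value L
  refine ⟨(2 * B / L + Real.sqrt A) ^ 2, by positivity, ?_⟩
  set C := (2 * B / L + Real.sqrt A) ^ 2 with hCdef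
  clear_value C
  have hC0 : 0 ≤ C := by rw [hCdef]; positivity
  intro lam hlam c hc nseq h1 hrec
  have hlam0 : 0 < lam := lt_of_lt_of_le zero_lt_one hlam
  have hn1 : ∀ i : ℕ, 1 ≤ i → 1 ≤ nseq i := by
    intro i hi
    induction i, hi using Nat.le_induction with
    | base => simp [h1]
    | succ i hi ih => rw [hrec i hi]; omega
  -- main claim: lam * nseq i ≤ (lam * i + C)^2
  have key : ∀ i : ℕ, 1 ≤ i → lam * (nseq i : ℝ) ≤ (lam * i + C) ^ 2 := by
    intro i hi
    induction i, hi using Nat.le_induction with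
    | base =>
      rw [h1]
      push_cast
      nlinarith [hlam0, hC0, hlam]
    | succ i hi ih =>
      have hi1 : (1 : ℝ) ≤ (i : ℝ) := by exact_mod_cast hi
      set t := lam * i + C with htdef
      clear_value t
      have ht1 : 1 ≤ t := by nlinarith
      have ht0 : 0 < t := lt_of_lt_of_le zero_lt_one ht1
      have htC : C ≤ t := by nlinarith
      -- sqrt t ≥ 2B/L + sqrt A
      have hsq : 2 * B / L + Real.sqrt A ≤ Real.sqrt t := by
        have : Real.sqrt C ≤ Real.sqrt t := Real.sqrt_le_sqrt htC
        rwa [hCdef, Real.sqrt_sq (by positivity)] at this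
      have hst : Real.sqrt t ^ 2 = t := Real.sq_sqrt ht0.le
      have hst0 : 0 ≤ Real.sqrt t := Real.sqrt_nonneg t
      -- log t ≤ 2 * sqrt t
      have hlog : Real.log t ≤ 2 * Real.sqrt t := by
        have h1' : Real.log (Real.sqrt t) ≤ Real.sqrt t - 1 :=
          Real.log_le_sub_one_of_pos (Real.sqrt_pos.mpr ht0)
        have h2' : Real.log (Real.sqrt t) = Real.log t / 2 := Real.log_sqrt ht0.le
        nlinarith
      -- key analytic inequality: A + (2B/L) * log t ≤ 2 * t
      have hkey : A + 2 * B / L * Real.log t ≤ 2 * t := by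
        have hA' : Real.sqrt A ^ 2 = A := Real.sq_sqrt hA.le
        have hB' : 0 ≤ 2 * B / L := by positivity
        have hsA : 0 ≤ Real.sqrt A := Real.sqrt_nonneg A
        nlinarith [mul_le_mul_of_nonneg_left hlog hB',
          mul_le_mul hsq hsq (by positivity) hst0]
      -- bound on c (nseq i)
      have hni : 1 ≤ nseq i := hn1 i hi
      have hni' : (1 : ℝ) ≤ (nseq i : ℝ) := by exact_mod_cast hni
      have hcb : (c (nseq i) : ℝ) ≤ A + B * (Real.log (lam * nseq i) / L) :=
        hc (nseq i) hni
      have hlogmono : Real.log (lam * nseq i) ≤ Real.log (t ^ 2) :=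
        Real.log_le_log (by positivity) ih
      have hlogt2 : Real.log (t ^ 2) = 2 * Real.log t := by
        rw [Real.log_pow]; push_cast; ring
      have hcb2 : (c (nseq i) : ℝ) ≤ A + 2 * B / L * Real.log t := by
        rw [hlogt2] at hlogmono
        have : B * (Real.log (lam * nseq i) / L) ≤ B * (2 * Real.log t / L) := by
          apply mul_le_mul_of_nonneg_left _ hB.le
          exact div_le_div_of_nonneg_right hlogmono hL.le
        calc (c (nseq i) : ℝ) ≤ A + B * (Real.log (lam * nseq i) / L) := hcb
          _ ≤ A + B * (2 * Real.log t / L) := by linarith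
          _ = A + 2 * B / L * Real.log t := by field_simp
      have hcc : (c (nseq i) : ℝ) ≤ 2 * t := le_trans hcb2 hkey
      have hrw : (nseq (i + 1) : ℝ) = (nseq i : ℝ) + (c (nseq i) : ℝ) := by
        rw [hrec i hi]; push_cast; ring
      have hgoal : lam * (nseq (i + 1) : ℝ) ≤ t ^ 2 + 2 * lam * t := by
        rw [hrw]
        have : lam * (c (nseq i) : ℝ) ≤ lam * (2 * t) :=
          mul_le_mul_of_nonneg_left hcc hlam0.le
        nlinarith
      have : (lam * ((i : ℝ) + 1) + C) = t + lam := by rw [htdef]; ring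
      push_cast
      rw [this]
      nlinarith
  intro i hi
  have h := key i hi
  have heq : (nseq i : ℝ) = lam⁻¹ * (lam * nseq i) := by field_simp
  rw [heq]
  exact mul_le_mul_of_nonneg_left h (by positivity)
end
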